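/- arXiv:2107.00363 — 4 statements merged into one kernel-verified Lean document; each statement's English description precedes it below -/
import Mathlib

section
/- If $Z_1,\dots,Z_n,Z_{n+1}$ are exchangeable real-valued random variables, then for any $\alpha\in(0,1)$, the probability that $Z_{n+1}$ is at most the $\lceil (1-\alpha)(n+1)\rceil$-th smallest value among $Z_1,\dots,Z_n$ (with the convention that this value is $+\infty$ if $\lceil(1-\alpha)(n+1)\rceil > n$) is at least $1-\alpha$. -/
/-! Let `r_i` be the number of scores strictly below `Z_i`. For every realisation at least
`k ≤ n + 1` of the indices have `r_i < k`, so the events `{r_i < k}` have probabilities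
summing to at least `k`; by exchangeability these probabilities all coincide, hence
`P (r_{n+1} < k) ≥ k / (n + 1) ≥ 1 - α` for `k = ⌈(1 - α)(n + 1)⌉`. Finally, `r_{n+1} < k`
says exactly that `Z_{n+1}` is at most the `k`-th smallest of `Z_1, …, Z_n`. -/

open MeasureTheory

/-- The `k`-th smallest value (1-indexed) of the vector `v : Fin n → ℝ`, with the
convention that it is `+∞` (in `EReal`) if `k > n`. -/
noncomputable def kthSmallest (n : ℕ) (v : Fin n → ℝ) (k : ℕ) : EReal :=
  if h : k - 1 < n then ((v (Tuple.sort v ⟨k - 1, h⟩) : ℝ) : EReal) else ⊤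

open Finset ProbabilityTheory
open scoped ENNReal

section Rank

variable {ι κ α : Type*} [Fintype ι] [Fintype κ] [LinearOrder α]

def strictRank (x : ι → α) (i : ι) : ℕ := #{j | x j < x i}

lemma strictRank_comp_equiv (x : ι → α) (e : κ ≃ ι) (k : κ) :
    strictRank (x ∘ e) k = strictRank x (e k) :=
  card_equiv e (by simp)

lemma le_card_strictRank_lt (x : ι → α) {k : ℕ} (hk : k ≤ Fintype.card ι) :
    k ≤ #{i | strictRank x i < k} := by
  classical
  set s : Finset ι := {i | strictRank x i < k}
  -- an index of minimal value outside `s` has all strictly smaller entries in `s`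
  by_contra! hs
  obtain ⟨i, hi, hmin⟩ := sᶜ.exists_min_image x (by rw [← card_pos, card_compl]; omega)
  have hrank : strictRank x i ≤ #s := card_le_card fun j hj => by
    by_contra hjs
    exact (hmin j (mem_compl.2 hjs)).not_gt (mem_filter.1 hj).2
  exact mem_compl.1 hi (mem_filter.2 ⟨mem_univ i, hrank.trans_lt hs⟩)

lemma strictRank_last {n : ℕ} (y : Fin (n + 1) → α) :
    strictRank y (Fin.last n) = #{i : Fin n | y i.castSucc < y (Fin.last n)} := by
  simp only [strictRank, card_filter, Fin.sum_univ_castSucc, lt_self_iff_false, if_false, add_zero]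

lemma Monotone.le_apply_iff_card_lt_le {n : ℕ} {w : Fin n → α} (hw : Monotone w) (t : Fin n)
    (a : α) : a ≤ w t ↔ #{i | w i < a} ≤ t := by
  constructor
  · intro hat
    calc #{i | w i < a} ≤ #(Iio t) :=
          card_le_card fun i hi => mem_Iio.2 (hw.reflect_lt ((mem_filter.1 hi).2.trans_le hat))
      _ = t := Fin.card_Iio t
  · intro hcard
    by_contra! hta
    have : #(Iic t) ≤ #{i | w i < a} :=
      card_le_card fun i hi => mem_filter.2 ⟨mem_univ i, (hw (mem_Iic.1 hi)).trans_lt hta⟩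
    rw [Fin.card_Iic] at this
    omega

lemma le_apply_sort_iff {n : ℕ} (v : Fin n → α) (t : Fin n) (a : α) :
    a ≤ v (Tuple.sort v t) ↔ #{i | v i < a} ≤ t := by
  rw [← Function.comp_apply (f := v), (Tuple.monotone_sort v).le_apply_iff_card_lt_le]
  rw [card_equiv (Tuple.sort v) (t := {i | v i < a}) (by simp)]

end Rank

lemma coe_le_kthSmallest_iff {n : ℕ} (v : Fin n → ℝ) (x : ℝ) {k : ℕ} (hk : k ≠ 0) :
    (x : EReal) ≤ kthSmallest n v k ↔ #{i | v i < x} < k := by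
  unfold kthSmallest
  split_ifs with h
  · rw [EReal.coe_le_coe_iff, le_apply_sort_iff, Fin.val_mk]
    omega
  · simp only [le_top, true_iff]
    calc #{i | v i < x} ≤ n := (card_le_univ _).trans_eq (Fintype.card_fin n)
      _ < k := by omega

section Measurability

variable {Ω ι α : Type*} [MeasurableSpace Ω] [Fintype ι]

open Classical in
lemma le_sum_measure_of_le_card {μ : Measure Ω} {B : ι → Set Ω}
    (hB : ∀ i, MeasurableSet (B i)) {k : ℕ} (hk : ∀ ω, k ≤ #{i | ω ∈ B i}) :
    k * μ Set.univ ≤ ∑ i, μ (B i) := by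
  calc k * μ Set.univ = ∫⁻ _, (k : ℝ≥0∞) ∂μ := (lintegral_const _).symm
    _ ≤ ∫⁻ ω, ∑ i, (B i).indicator 1 ω ∂μ := lintegral_mono fun ω => by
        simpa [Set.indicator_apply, sum_boole] using hk ω
    _ = ∑ i, μ (B i) := by
        rw [lintegral_finsetSum _ fun i _ => measurable_one.indicator (hB i)]
        simp_rw [lintegral_indicator_one (hB _)]

lemma measurableSet_strictRank_lt [MeasurableSpace α] [LinearOrder α] [TopologicalSpace α]
    [OrderClosedTopology α] [SecondCountableTopology α] [OpensMeasurableSpace α]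
    (i : ι) (k : ℕ) : MeasurableSet {x : ι → α | strictRank x i < k} := by
  classical
  have : Measurable fun x : ι → α => strictRank x i := by
    simp_rw [strictRank, card_filter]
    exact Finset.measurable_sum _ fun j _ => Measurable.ite
      (measurableSet_lt (measurable_pi_apply j) (measurable_pi_apply i))
      measurable_const measurable_const
  exact this measurableSet_Iio

end Measurability

namespace ProbabilityTheory

variable {Ω ι α : Type*} [MeasurableSpace Ω] [MeasurableSpace α]

def Exchangeable (X : Ω → ι → α) (P : Measure Ω) : Prop :=
  ∀ σ : Equiv.Perm ι, P.map (fun ω => X ω ∘ σ) = P.map X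

lemma Exchangeable.measure_comp_perm_mem {X : Ω → ι → α} {P : Measure Ω}
    (hX : Exchangeable X P) (hXm : Measurable X) (σ : Equiv.Perm ι) {S : Set (ι → α)}
    (hS : MeasurableSet S) : P {ω | X ω ∘ σ ∈ S} = P (X ⁻¹' S) := by
  have hσ : Measurable fun ω => X ω ∘ σ :=
    measurable_pi_lambda _ fun i => (measurable_pi_apply (σ i)).comp hXm
  rw [← Measure.map_apply hXm hS, ← hX σ, Measure.map_apply hσ hS]
  rfl

lemma Exchangeable.card_le_mul_measure_strictRank_lt [Fintype ι] [DecidableEq ι] [LinearOrder α]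
    [TopologicalSpace α] [OrderClosedTopology α] [SecondCountableTopology α]
    [OpensMeasurableSpace α] {X : Ω → ι → α} {P : Measure Ω} [IsProbabilityMeasure P]
    (hX : Exchangeable X P) (hXm : Measurable X) (i : ι) {k : ℕ} (hk : k ≤ Fintype.card ι) :
    k ≤ Fintype.card ι * P {ω | strictRank (X ω) i < k} := by
  have hsymm (j : ι) : P {ω | strictRank (X ω) j < k} = P {ω | strictRank (X ω) i < k} := by
    have := hX.measure_comp_perm_mem hXm (Equiv.swap i j) (measurableSet_strictRank_lt i k)
    simpa [strictRank_comp_equiv] using this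
  calc (k : ℝ≥0∞) ≤ ∑ j, P {ω | strictRank (X ω) j < k} := by
        simpa using le_sum_measure_of_le_card (μ := P)
          (fun j => hXm (measurableSet_strictRank_lt j k))
          fun ω => by convert le_card_strictRank_lt (X ω) hk; rfl
    _ = Fintype.card ι * P {ω | strictRank (X ω) i < k} := by simp [hsymm]

end ProbabilityTheory

/-- Marginal validity of split conformal prediction: if `Z 0, …, Z n` (i.e.
`Z_1, …, Z_{n+1}`) are exchangeable real random variables, then for `α ∈ (0,1)` the
probability that `Z_{n+1}` is at most the `⌈(1-α)(n+1)⌉`-th smallest of `Z_1, …, Z_n`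
(with the value `+∞` if `⌈(1-α)(n+1)⌉ > n`) is at least `1 - α`. -/
theorem conformal_marginal_validity
    {Ω : Type*} [MeasurableSpace Ω] (P : Measure Ω) [IsProbabilityMeasure P]
    (n : ℕ) (Z : Fin (n + 1) → Ω → ℝ) (hmeas : ∀ i, Measurable (Z i))
    (hexch : ∀ σ : Equiv.Perm (Fin (n + 1)),
      Measure.map (fun ω i => Z (σ i) ω) P = Measure.map (fun ω i => Z i ω) P)
    (α : ℝ) (hα : α ∈ Set.Ioo (0 : ℝ) 1) :
    1 - α ≤
      (P {ω : Ω | (Z (Fin.last n) ω : EReal) ≤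
        kthSmallest n (fun i : Fin n => Z i.castSucc ω)
          ⌈(1 - α) * (n + 1)⌉₊}).toReal := by
  obtain ⟨hα0, hα1⟩ := hα
  set k := ⌈(1 - α) * (n + 1)⌉₊
  have hk0 : k ≠ 0 := (Nat.ceil_pos.2 (by nlinarith)).ne'
  have hkn : k ≤ n + 1 := Nat.ceil_le.2 (by push_cast; nlinarith)
  have hevent : {ω | (Z (Fin.last n) ω : EReal) ≤ kthSmallest n (fun i => Z i.castSucc ω) k}
      = {ω | strictRank (fun i => Z i ω) (Fin.last n) < k} := by
    ext ω
    simp only [Set.mem_ofPred_eq, coe_le_kthSmallest_iff _ _ hk0, strictRank_last]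
  have hbound := Exchangeable.card_le_mul_measure_strictRank_lt (X := fun ω i => Z i ω) hexch
    (measurable_pi_lambda _ hmeas) (Fin.last n) (by simpa using hkn)
  rw [Fintype.card_fin] at hbound
  have hbound_real := ENNReal.toReal_mono (by finiteness) hbound
  rw [ENNReal.toReal_mul, ENNReal.toReal_natCast, ENNReal.toReal_natCast, Nat.cast_succ]
    at hbound_real
  rw [hevent]
  nlinarith [Nat.le_ceil ((1 - α) * (n + 1))]
end

section
/- If $Z_1,\dots,Z_{n+1}$ are exchangeable random variables whose joint distribution is such that ties occur with probability zero (i.e. almost surely all values are distinct), then the rank of $Z_{n+1}$ among $Z_1,\dots,Z_{n+1}$ is uniformly distributed on $\{1,\dots,n+1\}$. -/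
open MeasureTheory Finset
open scoped ENNReal

/-- Reindexing a filter over `univ` by a permutation does not change the cardinality. -/
lemma card_filter_perm_aux {m : ℕ} (σ : Equiv.Perm (Fin m)) (p : Fin m → Prop)
    [DecidablePred p] :
    (Finset.univ.filter fun i => p (σ i)).card = (Finset.univ.filter p).card := by
  apply Finset.card_bij (fun a _ => σ a)
  · intro a ha
    simp only [mem_filter, mem_univ, true_and] at ha ⊢
    exact ha
  · intro a _ b _ h
    exact σ.injective h
  · intro b hb
    simp only [mem_filter, mem_univ, true_and] at hb
    exact ⟨σ.symm b, by simp [hb], by simp⟩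

/-- If `Z_1, …, Z_{n+1}` are exchangeable real random variables whose values are
almost surely pairwise distinct, then the rank of `Z_{n+1}` among `Z_1, …, Z_{n+1}`
(the number of indices `i` with `Z_i ≤ Z_{n+1}`) is uniformly distributed on
`{1, …, n+1}`. -/
theorem rank_uniform_of_exchangeable
    {Ω : Type*} [MeasurableSpace Ω] (P : Measure Ω) [IsProbabilityMeasure P]
    (n : ℕ) (Z : Fin (n + 1) → Ω → ℝ) (hmeas : ∀ i, Measurable (Z i))
    (hexch : ∀ σ : Equiv.Perm (Fin (n + 1)),
      Measure.map (fun ω i => Z (σ i) ω) P = Measure.map (fun ω i => Z i ω) P)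
    (hdistinct : ∀ᵐ ω ∂P, Function.Injective fun i => Z i ω) :
    ∀ r ∈ Finset.Icc 1 (n + 1),
      P {ω : Ω |
          (Finset.univ.filter fun i : Fin (n + 1) =>
            Z i ω ≤ Z (Fin.last n) ω).card = r} = 1 / (n + 1) := by
  intro r hr
  classical
  -- the rank function
  set ρ : Ω → Fin (n + 1) → ℕ :=
    fun ω k => (Finset.univ.filter fun i => Z i ω ≤ Z k ω).card with hρ
  set E : Fin (n + 1) → Set Ω := fun k => {ω | ρ ω k = r} with hEdef
  have hρmeas : ∀ k, Measurable fun ω => ρ ω k := by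
    intro k
    simp only [hρ, Finset.card_filter]
    exact Finset.measurable_sum _ fun i _ =>
      Measurable.ite (measurableSet_le (hmeas i) (hmeas k)) measurable_const
        measurable_const
  have hEmeas : ∀ k, MeasurableSet (E k) := fun k =>
    (hρmeas k) (measurableSet_singleton r)
  -- all ranks have the same distribution, by exchangeability
  have hsame : ∀ k, P (E k) = P (E (Fin.last n)) := by
    intro k
    set σ := Equiv.swap k (Fin.last n) with hσ
    have hF : Measurable (fun ω i => Z i ω : Ω → Fin (n + 1) → ℝ) :=
      measurable_pi_lambda _ hmeas
    have hFσ : Measurable (fun ω i => Z (σ i) ω : Ω → Fin (n + 1) → ℝ) :=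
      measurable_pi_lambda _ fun i => hmeas (σ i)
    set S : Set (Fin (n + 1) → ℝ) :=
      {v | (Finset.univ.filter fun i => v i ≤ v (Fin.last n)).card = r} with hSdef
    have hSmeas : MeasurableSet S := by
      have h : Measurable fun v : Fin (n + 1) → ℝ =>
          (Finset.univ.filter fun i => v i ≤ v (Fin.last n)).card := by
        simp only [Finset.card_filter]
        exact Finset.measurable_sum _ fun i _ =>
          Measurable.ite (measurableSet_le (measurable_pi_apply i)
            (measurable_pi_apply _)) measurable_const measurable_const
      exact h (measurableSet_singleton r)
    have h1 : (fun ω i => Z i ω) ⁻¹' S = E (Fin.last n) := rfl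
    have h2 : (fun ω i => Z (σ i) ω) ⁻¹' S = E k := by
      ext ω
      simp only [Set.mem_preimage, hSdef, Set.mem_setOf_eq, hEdef, hρ]
      have hσl : σ (Fin.last n) = k := Equiv.swap_apply_right _ _
      simp only [hσl]
      rw [card_filter_perm_aux σ (fun i => Z i ω ≤ Z k ω)]
    calc P (E k) = Measure.map (fun ω i => Z (σ i) ω) P S := by
          rw [Measure.map_apply hFσ hSmeas, h2]
      _ = Measure.map (fun ω i => Z i ω) P S := by rw [hexch σ]
      _ = P (E (Fin.last n)) := by rw [Measure.map_apply hF hSmeas, h1]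
  -- the good set where all values are distinct
  set G : Set Ω := {ω | ∀ i j : Fin (n + 1), Z i ω = Z j ω → i = j} with hGdef
  have hGmeas : MeasurableSet G := by
    have hG : G = ⋂ i, ⋂ j, {ω | Z i ω = Z j ω → i = j} := by
      ext ω; simp [hGdef, Set.mem_iInter]
    rw [hG]
    refine MeasurableSet.iInter fun i => MeasurableSet.iInter fun j => ?_
    by_cases h : i = j
    · simp [h]
    · have he : {ω | Z i ω = Z j ω → i = j} = {ω | Z i ω = Z j ω}ᶜ := by
        ext ω; simp [h]
      rw [he]
      exact (measurableSet_eq_fun (hmeas i) (hmeas j)).compl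
  have hGc0 : P Gᶜ = 0 := by
    have h : ∀ᵐ ω ∂P, ω ∈ G := by
      filter_upwards [hdistinct] with ω hω i j hij
      exact hω hij
    exact ae_iff.mp h
  have hG1 : P G = 1 := by
    have h := measure_add_measure_compl (μ := P) hGmeas
    rw [hGc0, add_zero, measure_univ] at h
    exact h
  -- ranks take values in Icc 1 (n+1)
  have hmem : ∀ ω k, ρ ω k ∈ Finset.Icc 1 (n + 1) := by
    intro ω k
    rw [Finset.mem_Icc]
    constructor
    · have hk : k ∈ Finset.univ.filter fun i => Z i ω ≤ Z k ω := by simp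
      exact Finset.card_pos.mpr ⟨k, hk⟩
    · calc ρ ω k ≤ (Finset.univ : Finset (Fin (n + 1))).card :=
          Finset.card_filter_le _ _
        _ = n + 1 := by simp
  -- strict monotonicity of ranks
  have hmono : ∀ ω, ∀ k j : Fin (n + 1), Z k ω < Z j ω → ρ ω k < ρ ω j := by
    intro ω k j h
    apply Finset.card_lt_card
    constructor
    · intro i hi
      simp only [mem_filter, mem_univ, true_and] at hi ⊢
      exact hi.trans h.le
    · intro hsub
      have hj : j ∈ Finset.univ.filter fun i => Z i ω ≤ Z j ω := by simp
      have hjj := hsub hj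
      simp only [mem_filter, mem_univ, true_and] at hjj
      exact absurd hjj (not_le.mpr h)
  -- on G, the rank map is injective
  have hinj : ∀ ω ∈ G, Function.Injective (ρ ω) := by
    intro ω hω k j hkj
    by_contra hne
    have hZ : Z k ω ≠ Z j ω := fun h => hne (hω _ _ h)
    rcases hZ.lt_or_gt with h | h
    · exact absurd hkj (hmono ω k j h).ne
    · exact absurd hkj.symm (hmono ω j k h).ne
  -- on G, the rank map is onto Icc 1 (n+1)
  have himage : ∀ ω ∈ G, Finset.image (ρ ω) Finset.univ = Finset.Icc 1 (n + 1) := by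
    intro ω hω
    apply Finset.eq_of_subset_of_card_le
    · intro x hx
      simp only [Finset.mem_image] at hx
      obtain ⟨k, _, rfl⟩ := hx
      exact hmem ω k
    · rw [Nat.card_Icc, Finset.card_image_of_injective _ (hinj ω hω)]
      simp
  -- the events partition G
  have hEG : (⋃ k, E k ∩ G) = G := by
    apply Set.Subset.antisymm
    · exact Set.iUnion_subset fun k => Set.inter_subset_right
    · intro ω hω
      have hrr : r ∈ Finset.image (ρ ω) Finset.univ := by
        rw [himage ω hω]; exact hr
      simp only [Finset.mem_image] at hrr
      obtain ⟨k, _, hk⟩ := hrr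
      exact Set.mem_iUnion.mpr ⟨k, hk, hω⟩
  have hdisj : Pairwise (Function.onFun Disjoint fun k => E k ∩ G) := by
    intro k j hkj
    rw [Function.onFun, Set.disjoint_left]
    rintro ω ⟨hk, hω⟩ ⟨hj, _⟩
    exact hkj (hinj ω hω (hk.trans hj.symm))
  have hsum : ∑ k : Fin (n + 1), P (E k ∩ G) = 1 := by
    have h := measure_iUnion (μ := P) hdisj (fun k => (hEmeas k).inter hGmeas)
    rw [hEG, hG1, tsum_fintype] at h
    exact h.symm
  have hEGk : ∀ k, P (E k ∩ G) = P (E k) := by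
    intro k
    have h := measure_inter_add_diff (μ := P) (E k) hGmeas
    have h2 : P (E k \ G) = 0 :=
      measure_mono_null (fun x hx => hx.2) hGc0
    rw [h2, add_zero] at h
    exact h
  have hfin : (↑(n + 1) : ℝ≥0∞) * P (E (Fin.last n)) = 1 := by
    have h : ∑ k : Fin (n + 1), P (E k ∩ G) =
        (↑(n + 1) : ℝ≥0∞) * P (E (Fin.last n)) := by
      rw [Finset.sum_congr rfl fun k _ => (hEGk k).trans (hsame k),
        Finset.sum_const, Finset.card_univ, Fintype.card_fin, nsmul_eq_mul]
    rw [← h, hsum]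
  have hgoal : {ω : Ω | (Finset.univ.filter fun i : Fin (n + 1) =>
      Z i ω ≤ Z (Fin.last n) ω).card = r} = E (Fin.last n) := rfl
  rw [hgoal]
  have hne : ((n : ℝ≥0∞) + 1) ≠ 0 := by simp
  have hnt : ((n : ℝ≥0∞) + 1) ≠ ⊤ :=
    ENNReal.add_ne_top.mpr ⟨ENNReal.natCast_ne_top n, ENNReal.one_ne_top⟩
  rw [ENNReal.eq_div_iff hne hnt]
  push_cast at hfin
  exact hfin
end

section
/- Under exchangeability of $Z_1,\dots,Z_{n+1}$ with almost surely distinct values, the conformal coverage probability is also upper-bounded: $\mathrm{Prob}\{Z_{n+1} \le Q_{1-\alpha}\} \le 1-\alpha + \frac{1}{n+1}$, where $Q_{1-\alpha}$ denotes the $\lceil(1-\alpha)(n+1)\rceil$-th smallest value of $Z_1,\dots,Z_n$. -/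
open MeasureTheory ENNReal Finset

noncomputable def rankCP {m : ℕ} (v : Fin m → ℝ) (i : Fin m) : ℕ :=
  (Finset.univ.filter fun j => v j ≤ v i).card

lemma card_filter_comp_equiv {β : Type*} [Fintype β] (σ : Equiv.Perm β)
    (p : β → Prop) [DecidablePred p] :
    (Finset.univ.filter fun i => p (σ i)).card = (Finset.univ.filter p).card := by
  apply Finset.card_bij' (fun i _ => σ i) (fun j _ => σ.symm j) <;> simp

lemma rankCP_comp_perm {m : ℕ} (v : Fin m → ℝ) (σ : Equiv.Perm (Fin m)) (i : Fin m) :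
    rankCP (fun j => v (σ j)) i = rankCP v (σ i) := by
  unfold rankCP
  exact card_filter_comp_equiv σ (fun j => v j ≤ v (σ i))

-- rank is "strict mono" in value for injective v
lemma rankCP_lt_rankCP {m : ℕ} {v : Fin m → ℝ} (hv : Function.Injective v)
    {i i' : Fin m} (h : v i < v i') : rankCP v i < rankCP v i' := by
  unfold rankCP
  apply Finset.card_lt_card
  constructor
  · intro j hj
    simp only [mem_filter, mem_univ, true_and] at *
    exact hj.trans h.le
  · intro hsub
    have := hsub (by simp : i' ∈ Finset.univ.filter fun j => v j ≤ v i')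
    simp only [mem_filter, mem_univ, true_and] at this
    exact absurd h (not_lt.mpr this)

lemma rankCP_injective {m : ℕ} {v : Fin m → ℝ} (hv : Function.Injective v) :
    Function.Injective (rankCP v) := by
  intro i j hij
  by_contra hne
  rcases lt_or_gt_of_ne (fun h : v i = v j => hne (hv h)) with h | h
  · exact absurd hij (rankCP_lt_rankCP hv h).ne
  · exact absurd hij.symm (rankCP_lt_rankCP hv h).ne

lemma rankCP_mem_Icc {m : ℕ} (v : Fin m → ℝ) (i : Fin m) :
    rankCP v i ∈ Finset.Icc 1 m := by
  classical
  unfold rankCP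
  rw [Finset.mem_Icc]
  constructor
  · rw [Nat.one_le_iff_ne_zero, ← Nat.pos_iff_ne_zero, Finset.card_pos]
    exact ⟨i, by simp⟩
  · simpa using Finset.card_filter_le Finset.univ fun j => v j ≤ v i

lemma card_rankCP_le {m k : ℕ} {v : Fin m → ℝ} (hv : Function.Injective v) (hk : k ≤ m) :
    (Finset.univ.filter fun i => rankCP v i ≤ k).card = k := by
  have himg : Finset.univ.image (rankCP v) = Finset.Icc 1 m := by
    apply Finset.eq_of_subset_of_card_le
    · intro x hx
      simp only [Finset.mem_image] at hx
      obtain ⟨i, _, rfl⟩ := hx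
      exact rankCP_mem_Icc v i
    · rw [Finset.card_image_of_injective _ (rankCP_injective hv)]
      simp [Nat.card_Icc]
  have h1 : (Finset.univ.filter fun i => rankCP v i ≤ k).card
      = ((Finset.univ.image (rankCP v)).filter (· ≤ k)).card := by
    rw [← Finset.card_image_of_injective (Finset.univ.filter fun i => rankCP v i ≤ k) (rankCP_injective hv), Finset.filter_image]
  rw [h1, himg]
  have : (Finset.Icc 1 m).filter (· ≤ k) = Finset.Icc 1 k := by
    ext x; simp only [Finset.mem_filter, Finset.mem_Icc]; omega
  rw [this, Nat.card_Icc]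
  omega

lemma rankCP_last {n : ℕ} (v : Fin (n+1) → ℝ) (hv : Function.Injective v) :
    rankCP v (Fin.last n)
      = (Finset.univ.filter fun i : Fin n => v i.castSucc < v (Fin.last n)).card + 1 := by
  classical
  unfold rankCP
  rw [Finset.card_filter, Finset.card_filter, Fin.sum_univ_castSucc]
  simp only [le_refl, if_true]
  congr 1
  apply Finset.sum_congr rfl
  intro i _
  have hne : v i.castSucc ≠ v (Fin.last n) := by
    intro h
    exact absurd (hv h) (Fin.castSucc_lt_last i).ne
  congr 1
  simp only [eq_iff_iff]
  exact ⟨fun h => h.lt_of_ne hne, fun h => h.le⟩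

lemma claim1 {n k : ℕ} (hk1 : 1 ≤ k) (hkn : k ≤ n) (v : Fin (n+1) → ℝ)
    (hv : Function.Injective v) :
    ((v (Fin.last n) : ℝ) : EReal) ≤ kthSmallest n (fun i : Fin n => v i.castSucc) k
      ↔ rankCP v (Fin.last n) ≤ k := by
  classical
  set w : Fin n → ℝ := fun i => v i.castSucc with hw
  set z : ℝ := v (Fin.last n) with hz
  have hwinj : Function.Injective w := by
    intro i j hij
    exact Fin.castSucc_injective n (hv hij)
  have hwne : ∀ i, w i ≠ z := by
    intro i h
    exact absurd (hv h) (Fin.castSucc_lt_last i).ne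
  have h : k - 1 < n := by omega
  set m : Fin n := ⟨k - 1, h⟩ with hm
  set σ : Equiv.Perm (Fin n) := Tuple.sort w with hσ
  have hf : StrictMono (w ∘ σ) :=
    (Tuple.monotone_sort w).strictMono_of_injective (hwinj.comp σ.injective)
  have hkth : kthSmallest n w k = ((w (σ m) : ℝ) : EReal) := by
    rw [kthSmallest, dif_pos h]
  have hcw : (Finset.univ.filter fun i : Fin n => w i < z).card
      = (Finset.univ.filter fun i : Fin n => w (σ i) < z).card :=
    (card_filter_comp_equiv σ (fun i => w i < z)).symm
  have hmval : (m : ℕ) = k - 1 := rfl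
  rw [rankCP_last v hv, hkth, EReal.coe_le_coe_iff]
  change z ≤ w (σ m) ↔ (Finset.univ.filter fun i : Fin n => w i < z).card + 1 ≤ k
  constructor
  · intro hle
    have hzlt : z < w (σ m) := hle.lt_of_ne (fun hh => hwne (σ m) hh.symm)
    have hsub : (Finset.univ.filter fun i : Fin n => w (σ i) < z)
        ⊆ Finset.univ.filter fun i : Fin n => i < m := by
      intro i hi
      simp only [Finset.mem_filter, Finset.mem_univ, true_and] at *
      exact hf.lt_iff_lt.mp (hi.trans hzlt)
    have hcard : (Finset.univ.filter fun i : Fin n => i < m).card = k - 1 := by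
      have : (Finset.univ.filter fun i : Fin n => i < m) = Finset.Iio m := by
        ext i; simp
      rw [this, Fin.card_Iio, hmval]
    have := (Finset.card_le_card hsub).trans_eq hcard
    rw [hcw]
    omega
  · intro hle
    by_contra hlt
    push_neg at hlt
    have hsub : (Finset.univ.filter fun i : Fin n => i ≤ m)
        ⊆ Finset.univ.filter fun i : Fin n => w (σ i) < z := by
      intro i hi
      simp only [Finset.mem_filter, Finset.mem_univ, true_and] at *
      exact (hf.monotone hi).trans_lt hlt
    have hcard : (Finset.univ.filter fun i : Fin n => i ≤ m).card = k := by
      have : (Finset.univ.filter fun i : Fin n => i ≤ m) = Finset.Iic m := by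
        ext i; simp
      rw [this, Fin.card_Iic, hmval]
      omega
    have := hcard ▸ Finset.card_le_card hsub
    rw [hcw] at hle
    omega

lemma measurable_rankCP_le {m k : ℕ} (i : Fin m) :
    MeasurableSet {v : Fin m → ℝ | rankCP v i ≤ k} := by
  classical
  have hm : Measurable fun v : Fin m → ℝ => rankCP v i := by
    unfold rankCP
    simp_rw [Finset.card_filter]
    apply Finset.measurable_sum
    intro j _
    exact Measurable.ite
      (measurableSet_le (measurable_pi_apply j) (measurable_pi_apply i))
      measurable_const measurable_const
  exact hm measurableSet_Iic

lemma measurableSet_injectiveCP {m : ℕ} :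
    MeasurableSet {v : Fin m → ℝ | Function.Injective v} := by
  have heq : {v : Fin m → ℝ | Function.Injective v}
      = ⋂ (i) (j) (_ : i ≠ j), {v : Fin m → ℝ | v i ≠ v j} := by
    ext v
    simp only [Set.mem_iInter, Set.mem_setOf_eq]
    constructor
    · intro hv i j hij h; exact hij (hv h)
    · intro h a b hab; by_contra hne; exact h a b hne hab
  rw [heq]
  exact MeasurableSet.iInter fun i => MeasurableSet.iInter fun j =>
    MeasurableSet.iInter fun _ =>
      (measurableSet_eq_fun (measurable_pi_apply i) (measurable_pi_apply j)).compl


/-- Anti-conservativeness of split conformal prediction: under exchangeability of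
`Z_1, …, Z_{n+1}` with almost surely distinct values, and assuming
`⌈(1-α)(n+1)⌉ ≤ n`, the coverage probability satisfies
`Prob{Z_{n+1} ≤ Q_{1-α}} ≤ 1 - α + 1/(n+1)`, where `Q_{1-α}` is the
`⌈(1-α)(n+1)⌉`-th smallest of `Z_1, …, Z_n`. -/
theorem conformal_coverage_upper_bound
    {Ω : Type*} [MeasurableSpace Ω] (P : Measure Ω) [IsProbabilityMeasure P]
    (n : ℕ) (Z : Fin (n + 1) → Ω → ℝ) (hmeas : ∀ i, Measurable (Z i))
    (hexch : ∀ σ : Equiv.Perm (Fin (n + 1)),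
      Measure.map (fun ω i => Z (σ i) ω) P = Measure.map (fun ω i => Z i ω) P)
    (hdistinct : ∀ᵐ ω ∂P, Function.Injective fun i => Z i ω)
    (α : ℝ) (hα : α ∈ Set.Ioo (0 : ℝ) 1)
    (hk : ⌈(1 - α) * (n + 1)⌉₊ ≤ n) :
    (P {ω : Ω | (Z (Fin.last n) ω : EReal) ≤
        kthSmallest n (fun i : Fin n => Z i.castSucc ω)
          ⌈(1 - α) * (n + 1)⌉₊}).toReal ≤ 1 - α + 1 / (n + 1) := by
  classical
  obtain ⟨hα0, hα1⟩ := hα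
  have hx0 : (0:ℝ) < (1 - α) * (n + 1) := by
    have : (0:ℝ) < 1 - α := by linarith
    positivity
  set k := ⌈(1 - α) * (n + 1)⌉₊ with hkdef
  have hk1 : 1 ≤ k := Nat.one_le_ceil_iff.mpr hx0
  have hZmeas : Measurable fun ω (i : Fin (n+1)) => Z i ω := measurable_pi_lambda _ hmeas
  set μ := Measure.map (fun ω i => Z i ω) P with hμdef
  haveI : IsProbabilityMeasure μ := Measure.isProbabilityMeasure_map hZmeas.aemeasurable
  set A : Fin (n+1) → Set (Fin (n+1) → ℝ) := fun i => {v | rankCP v i ≤ k} with hA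
  have hAmeas : ∀ i, MeasurableSet (A i) := fun i => measurable_rankCP_le i
  have hAeq : ∀ i, μ (A i) = μ (A (Fin.last n)) := by
    intro i
    set σ := Equiv.swap i (Fin.last n) with hσ
    have hperm : Measurable fun v : Fin (n+1) → ℝ => fun j => v (σ j) :=
      measurable_pi_lambda _ fun j => measurable_pi_apply _
    have h1 : Measure.map (fun v : Fin (n+1) → ℝ => fun j => v (σ j)) μ = μ := by
      rw [hμdef, Measure.map_map hperm hZmeas]
      exact hexch σ
    have h2 : (fun v : Fin (n+1) → ℝ => fun j => v (σ j)) ⁻¹' A (Fin.last n) = A i := by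
      ext v
      simp only [Set.mem_preimage, hA, Set.mem_setOf_eq]
      rw [rankCP_comp_perm v σ (Fin.last n)]
      rw [hσ, Equiv.swap_apply_right]
    calc μ (A i) = μ ((fun v : Fin (n+1) → ℝ => fun j => v (σ j)) ⁻¹' A (Fin.last n)) := by
          rw [h2]
    _ = Measure.map (fun v : Fin (n+1) → ℝ => fun j => v (σ j)) μ (A (Fin.last n)) :=
          (Measure.map_apply hperm (hAmeas _)).symm
    _ = μ (A (Fin.last n)) := by rw [h1]
  have hinjμ : ∀ᵐ v ∂μ, Function.Injective v := by
    rw [hμdef, ae_map_iff hZmeas.aemeasurable measurableSet_injectiveCP]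
    exact hdistinct
  have hsum : ((n : ℝ≥0∞) + 1) * μ (A (Fin.last n)) = k := by
    have h4 : ∑ i, μ (A i) = ∫⁻ v, ∑ i, (A i).indicator (1 : (Fin (n+1) → ℝ) → ℝ≥0∞) v ∂μ := by
      rw [lintegral_finset_sum _ (fun i _ => measurable_one.indicator (hAmeas i))]
      exact Finset.sum_congr rfl fun i _ => (lintegral_indicator_one (hAmeas i)).symm
    have h5 : ∀ᵐ v ∂μ, ∑ i, (A i).indicator (1 : (Fin (n+1) → ℝ) → ℝ≥0∞) v = k := by
      filter_upwards [hinjμ] with v hv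
      have heq : ∑ i, (A i).indicator (1 : (Fin (n+1) → ℝ) → ℝ≥0∞) v
          = ((Finset.univ.filter fun i => rankCP v i ≤ k).card : ℝ≥0∞) := by
        rw [Finset.card_filter]
        push_cast
        apply Finset.sum_congr rfl
        intro i _
        by_cases hvi : rankCP v i ≤ k <;> simp [Set.indicator, hA, hvi]
      rw [heq, card_rankCP_le hv (by omega : k ≤ n + 1)]
    have h6 : ∑ i, μ (A i) = k := by
      rw [h4, lintegral_congr_ae h5, lintegral_const, measure_univ, mul_one]
    calc ((n : ℝ≥0∞) + 1) * μ (A (Fin.last n)) = ∑ _i : Fin (n+1), μ (A (Fin.last n)) := by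
          rw [Finset.sum_const, Finset.card_univ, Fintype.card_fin, nsmul_eq_mul]
          push_cast
          ring
    _ = ∑ i, μ (A i) := Finset.sum_congr rfl fun i _ => (hAeq i).symm
    _ = k := h6
  have hev : P {ω : Ω | (Z (Fin.last n) ω : EReal) ≤
        kthSmallest n (fun i : Fin n => Z i.castSucc ω) k}
      = μ (A (Fin.last n)) := by
    have hae : {ω : Ω | (Z (Fin.last n) ω : EReal) ≤
          kthSmallest n (fun i : Fin n => Z i.castSucc ω) k}
        =ᵐ[P] (fun ω (i : Fin (n+1)) => Z i ω) ⁻¹' A (Fin.last n) := by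
      rw [Filter.eventuallyEq_set]
      filter_upwards [hdistinct] with ω hω
      simp only [Set.mem_setOf_eq, Set.mem_preimage, hA]
      exact claim1 hk1 hk (fun i => Z i ω) hω
    rw [measure_congr hae, ← Measure.map_apply hZmeas (hAmeas _), ← hμdef]
  have hμA : (μ (A (Fin.last n))).toReal = (k : ℝ) / (n + 1) := by
    have hne : ((n : ℝ≥0∞) + 1) ≠ 0 := by simp
    have hnetop : ((n : ℝ≥0∞) + 1) ≠ ⊤ := by simp
    have hdiv : μ (A (Fin.last n)) = (k : ℝ≥0∞) / ((n : ℝ≥0∞) + 1) := by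
      rw [ENNReal.eq_div_iff hne hnetop, mul_comm]
      rw [mul_comm] at hsum
      exact hsum
    have hcast : ((n : ℝ≥0∞) + 1) = ((n + 1 : ℕ) : ℝ≥0∞) := by push_cast; ring
    rw [hdiv, hcast, ENNReal.toReal_div, ENNReal.toReal_natCast, ENNReal.toReal_natCast]
    push_cast
    ring
  rw [hev, hμA]
  rw [div_le_iff₀ (by positivity : (0:ℝ) < (n:ℝ) + 1)]
  have hceil : (k : ℝ) < (1 - α) * (n + 1) + 1 := Nat.ceil_lt_add_one hx0.le
  have hne : ((n:ℝ) + 1) ≠ 0 := by positivity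
  have : (1 - α + 1 / ((n:ℝ) + 1)) * ((n:ℝ) + 1) = (1 - α) * ((n:ℝ) + 1) + 1 := by
    field_simp
  rw [this]
  linarith
end

section
/- Let $Z_1, Z_2, \dots$ be i.i.d. real random variables with CDF $F$ continuous at the $(1-\alpha)$-quantile $q_{1-\alpha}$ and strictly increasing in a neighbourhood of it. Then the empirical $(1-\alpha)(1+1/n)$-quantile $\hat q_n$ of $Z_1,\dots,Z_n$ converges almost surely to $q_{1-\alpha}$ as $n\to\infty$, and consequently $\mathrm{Prob}\{Z_{n+1} \le \hat q_n\} \to 1-\alpha$. -/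
open MeasureTheory ProbabilityTheory Filter Finset Topology

/-! By the strong law of large numbers, the proportion of the first `n` scores below `q ± δ`
converges almost surely to `F (q ± δ)`, and these two values lie strictly on either side of
`1 - α`: below `q` by the definition of `q` as an infimum, above `q` by strict monotonicity.
Since the rank `⌈(1-α)(n+1)⌉` grows like `(1-α) n`, the empirical quantile is eventually in
`(q - δ, q + δ]`. It is a function of `Z 0, …, Z (n-1)` only, hence independent of `Z n`, so the
coverage equals `E[F(q̂ₙ)]`, which tends to `F q = 1 - α` by bounded convergence. -/

/-- The empirical `(1-α)(1+1/n)`-quantile of `Z 0, …, Z (n-1)`: the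
`⌈(1-α)(n+1)⌉`-th smallest value (the junk value `0` is used in the degenerate
case `⌈(1-α)(n+1)⌉ > n`, which occurs for at most finitely many `n`). -/
noncomputable def empiricalConformalQuantile {Ω : Type*} (α : ℝ) (Z : ℕ → Ω → ℝ)
    (n : ℕ) (ω : Ω) : ℝ :=
  let v : Fin n → ℝ := fun i => Z i ω
  if h : ⌈(1 - α) * (n + 1)⌉₊ - 1 < n then v (Tuple.sort v ⟨⌈(1 - α) * (n + 1)⌉₊ - 1, h⟩)
  else 0

theorem Tuple.apply_sort_le_iff {α : Type*} [LinearOrder α] {n : ℕ} (v : Fin n → α)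
    (j : Fin n) (a : α) : v (Tuple.sort v j) ≤ a ↔ (j : ℕ) < #{i | v i ≤ a} := by
  rw [← card_equiv (Tuple.sort v) (s := {i | v (Tuple.sort v i) ≤ a}) (by simp)]
  exact (Tuple.lt_card_le_iff_apply_le_of_monotone (Tuple.monotone_sort v)).symm

/-- Ranks count from `0`; the junk value is `0` when `n ≤ k`. -/
noncomputable def orderStatistic {n : ℕ} (k : ℕ) (v : Fin n → ℝ) : ℝ :=
  if h : k < n then v (Tuple.sort v ⟨k, h⟩) else 0

theorem orderStatistic_le_iff {n k : ℕ} (hk : k < n) (v : Fin n → ℝ) (a : ℝ) :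
    orderStatistic k v ≤ a ↔ k < #{i | v i ≤ a} := by
  rw [orderStatistic, dif_pos hk, Tuple.apply_sort_le_iff]

theorem measurable_orderStatistic (n k : ℕ) : Measurable (orderStatistic (n := n) k) := by
  by_cases hk : k < n
  · refine measurable_of_Iic fun a => ?_
    have hcount : Measurable fun v : Fin n → ℝ => #{i | v i ≤ a} := by
      simp_rw [card_filter]
      exact Finset.measurable_sum _ fun i _ =>
        measurable_const.ite (measurableSet_le (measurable_pi_apply i) measurable_const)
          measurable_const
    have hpre : orderStatistic (n := n) k ⁻¹' Set.Iic a = {v | k < #{i | v i ≤ a}} := by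
      ext v
      exact orderStatistic_le_iff hk v a
    rw [hpre]
    exact measurableSet_lt measurable_const hcount
  · have hzero : orderStatistic (n := n) k = fun _ => 0 := funext fun v => dif_neg hk
    rw [hzero]
    exact measurable_const

theorem empiricalConformalQuantile_eq_orderStatistic {Ω : Type*} (α : ℝ) (Z : ℕ → Ω → ℝ)
    (n : ℕ) (ω : Ω) : empiricalConformalQuantile α Z n ω =
      orderStatistic (⌈(1 - α) * (n + 1)⌉₊ - 1) fun i : Fin n => Z i ω :=
  rfl

theorem eventually_orderStatistic_mem_Ioc {v : ∀ n : ℕ, Fin n → ℝ} {k : ℕ → ℕ}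
    {p a b Fa Fb : ℝ} (hk : Tendsto (fun n => (k n : ℝ) / n) atTop (𝓝 p))
    (ha : Tendsto (fun n => (#{i | v n i ≤ a} : ℝ) / n) atTop (𝓝 Fa))
    (hb : Tendsto (fun n => (#{i | v n i ≤ b} : ℝ) / n) atTop (𝓝 Fb))
    (hFa : Fa < p) (hFb : p < Fb) :
    ∀ᶠ n in atTop, orderStatistic (k n - 1) (v n) ∈ Set.Ioc a b := by
  filter_upwards [ha.eventually_lt hk hFa, hk.eventually_lt hb hFb, eventually_gt_atTop 0]
    with n hna hnb hn
  have hn' : (0 : ℝ) < n := Nat.cast_pos.2 hn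
  have hcard_a : #{i | v n i ≤ a} < k n := by
    exact_mod_cast (div_lt_div_iff_of_pos_right hn').1 hna
  have hcard_b : k n < #{i | v n i ≤ b} := by
    exact_mod_cast (div_lt_div_iff_of_pos_right hn').1 hnb
  have hkn : k n - 1 < n := by
    have := card_le_univ {i | v n i ≤ b}
    rw [Fintype.card_fin] at this
    omega
  rw [Set.mem_Ioc, ← not_le, orderStatistic_le_iff hkn, orderStatistic_le_iff hkn]
  omega

theorem tendsto_natCeil_mul_add_one_div {c : ℝ} (hc : 0 ≤ c) :
    Tendsto (fun n : ℕ => (⌈c * (n + 1)⌉₊ : ℝ) / n) atTop (𝓝 c) := by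
  have h₁ : Tendsto (fun n : ℕ => (⌈c * (n + 1)⌉₊ : ℝ) / (n + 1)) atTop (𝓝 c) :=
    (tendsto_nat_ceil_mul_div_atTop hc).comp
      (tendsto_natCast_atTop_atTop.atTop_add tendsto_const_nhds)
  simpa using (h₁.div (tendsto_natCast_div_add_atTop (1 : ℝ)) one_ne_zero).congr fun n =>
    div_div_div_cancel_right₀ (by positivity) _ _

theorem ae_tendsto_of_forall_ae_eventually_dist_le {Ω E ι : Type*} [MeasurableSpace Ω]
    {P : Measure Ω} [PseudoMetricSpace E] {l : Filter ι} {X : ι → Ω → E} {x : E}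
    (h : ∀ δ > 0, ∀ᵐ ω ∂P, ∀ᶠ n in l, dist (X n ω) x ≤ δ) :
    ∀ᵐ ω ∂P, Tendsto (X · ω) l (𝓝 x) := by
  filter_upwards [ae_all_iff.2 fun m : ℕ => h (1 / (m + 1)) Nat.one_div_pos_of_nat] with ω hω
  refine Metric.tendsto_nhds.2 fun ε hε => ?_
  obtain ⟨m, hm⟩ := exists_nat_one_div_lt hε
  exact (hω m).mono fun n hn => hn.trans_lt hm

namespace ProbabilityTheory

noncomputable def quantile (μ : Measure ℝ) (p : ℝ) : ℝ := sInf {y | p ≤ cdf μ y}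

variable {μ : Measure ℝ} {p y : ℝ}

theorem bddBelow_setOf_le_cdf (hp : 0 < p) : BddBelow {y | p ≤ cdf μ y} := by
  obtain ⟨y₀, hy₀⟩ :=
    ((tendsto_cdf_atBot (μ := μ)).eventually (eventually_lt_nhds hp)).exists_forall_of_atBot
  exact ⟨y₀, fun y hy => le_of_not_gt fun hyy₀ => (hy₀ y hyy₀.le).not_ge hy⟩

theorem nonempty_setOf_le_cdf (hp : p < 1) : {y | p ≤ cdf μ y}.Nonempty :=
  ((tendsto_cdf_atTop (μ := μ)).eventually (eventually_gt_nhds hp)).exists.imp fun _ => le_of_lt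

theorem cdf_lt_of_lt_quantile (hp : 0 < p) (hy : y < quantile μ p) : cdf μ y < p :=
  lt_of_not_ge fun h => (csInf_le (bddBelow_setOf_le_cdf hp) h).not_gt hy

theorem le_cdf_of_quantile_lt (hp : p < 1) (hy : quantile μ p < y) : p ≤ cdf μ y := by
  obtain ⟨x, hx, hxy⟩ := exists_lt_of_csInf_lt (nonempty_setOf_le_cdf hp) hy
  exact hx.trans (monotone_cdf μ hxy.le)

theorem lt_cdf_quantile_add_of_strictMonoOn {ε δ : ℝ} (hp : p < 1) (hε : 0 < ε)
    (hmono : StrictMonoOn (cdf μ) (Set.Ioo (quantile μ p - ε) (quantile μ p + ε))) (hδ : 0 < δ) :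
    p < cdf μ (quantile μ p + δ) := by
  set δ' := min δ (ε / 2)
  have hδ' : 0 < δ' := lt_min hδ (half_pos hε)
  have hδ'ε : δ' ≤ ε / 2 := min_le_right _ _
  calc p ≤ cdf μ (quantile μ p + δ' / 2) := le_cdf_of_quantile_lt hp (by linarith)
    _ < cdf μ (quantile μ p + δ') :=
      hmono ⟨by linarith, by linarith⟩ ⟨by linarith, by linarith⟩ (by linarith)
    _ ≤ cdf μ (quantile μ p + δ) := monotone_cdf μ (by simp [δ'])

theorem cdf_quantile (hp : p ∈ Set.Ioo 0 1) (hc : ContinuousAt (cdf μ) (quantile μ p)) :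
    cdf μ (quantile μ p) = p := by
  apply le_antisymm
  · refine le_of_tendsto
      (hc.tendsto.mono_left (nhdsWithin_le_nhds (s := Set.Iio (quantile μ p)))) ?_
    filter_upwards [self_mem_nhdsWithin] with y hy
    exact (cdf_lt_of_lt_quantile hp.1 hy).le
  · refine ge_of_tendsto
      (hc.tendsto.mono_left (nhdsWithin_le_nhds (s := Set.Ioi (quantile μ p)))) ?_
    filter_upwards [self_mem_nhdsWithin] with y hy
    exact le_cdf_of_quantile_lt hp.2 hy

section IID

variable {Ω β : Type*} [MeasurableSpace Ω] [MeasurableSpace β] {P : Measure Ω} {Z : ℕ → Ω → β}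

theorem iIndepFun.indepFun_comp_initial (hindep : iIndepFun Z P) (hmeas : ∀ i, Measurable (Z i))
    {γ : Type*} [MeasurableSpace γ] {n : ℕ} {g : (Fin n → β) → γ} (hg : Measurable g) :
    IndepFun (fun ω => g fun i : Fin n => Z i ω) (Z n) P := by
  have hrange : ∀ i : Fin n, (i : ℕ) ∈ range n := fun i => mem_range.2 i.2
  have hψ : Measurable fun x : ({n} : Finset ℕ) → β => x ⟨n, mem_singleton_self n⟩ :=
    measurable_pi_apply _
  exact (hindep.indepFun_finset (range n) {n} (by simp) hmeas).comp
    (hg.comp (measurable_pi_lambda (fun x i => x ⟨i, hrange i⟩) fun i => measurable_pi_apply _)) hψ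

theorem ae_tendsto_card_filter_mem_div (hmeas : ∀ i, Measurable (Z i)) (hindep : iIndepFun Z P)
    (hident : ∀ i, P.map (Z i) = P.map (Z 0)) {s : Set β} (hs : MeasurableSet s)
    [DecidablePred (· ∈ s)] :
    ∀ᵐ ω ∂P, Tendsto (fun n : ℕ => (#{i : Fin n | Z i ω ∈ s} : ℝ) / n) atTop
      (𝓝 ((P.map (Z 0)).real s)) := by
  have := hindep.isProbabilityMeasure
  have hind : Measurable (s.indicator (1 : β → ℝ)) := measurable_one.indicator hs
  have hmean : ∫ ω, s.indicator (1 : β → ℝ) (Z 0 ω) ∂P = (P.map (Z 0)).real s := by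
    rw [← integral_map (hmeas 0).aemeasurable hind.aestronglyMeasurable, integral_indicator_one hs]
  filter_upwards [strong_law_ae (fun i ω => s.indicator (1 : β → ℝ) (Z i ω))
    ((integrable_const 1).indicator (hmeas 0 hs))
    (fun i j hij => (hindep.indepFun hij).comp hind hind)
    (fun i => (IdentDistrib.mk (hmeas i).aemeasurable (hmeas 0).aemeasurable (hident i)).comp hind)]
    with ω hω
  rw [hmean] at hω
  refine hω.congr fun n => ?_
  rw [smul_eq_mul, inv_mul_eq_div, ← Fin.sum_univ_eq_sum_range, card_filter]
  simp [Set.indicator_apply]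

end IID

section Coverage

variable {Ω : Type*} [MeasurableSpace Ω] {P : Measure Ω} [IsProbabilityMeasure P]

theorem measureReal_le_eq_integral_cdf {X Y : Ω → ℝ} (hX : Measurable X) (hY : Measurable Y)
    (hXY : IndepFun X Y P) : P.real {ω | Y ω ≤ X ω} = ∫ ω, cdf (P.map Y) (X ω) ∂P := by
  have : IsProbabilityMeasure (P.map Y) := Measure.isProbabilityMeasure_map hY.aemeasurable
  have hset : MeasurableSet {z : ℝ × ℝ | z.2 ≤ z.1} :=
    measurableSet_le measurable_snd measurable_fst
  have hcdf : Measurable (cdf (P.map Y)) := (monotone_cdf _).measurable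
  rw [show {ω | Y ω ≤ X ω} = (fun ω => (X ω, Y ω)) ⁻¹' {z | z.2 ≤ z.1} from rfl,
    ← map_measureReal_apply (hX.prodMk hY) hset,
    (indepFun_iff_map_prod_eq_prod_map_map hX.aemeasurable hY.aemeasurable).1 hXY,
    measureReal_def, Measure.prod_apply hset,
    ← integral_map hX.aemeasurable hcdf.aestronglyMeasurable,
    integral_eq_lintegral_of_nonneg_ae (ae_of_all _ (cdf_nonneg _)) hcdf.aestronglyMeasurable]
  simp_rw [ofReal_cdf]
  rfl

theorem tendsto_integral_cdf_comp (μ : Measure ℝ) {X : ℕ → Ω → ℝ} {x : ℝ}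
    (hX : ∀ n, Measurable (X n)) (hlim : ∀ᵐ ω ∂P, Tendsto (X · ω) atTop (𝓝 x))
    (hc : ContinuousAt (cdf μ) x) :
    Tendsto (fun n => ∫ ω, cdf μ (X n ω) ∂P) atTop (𝓝 (cdf μ x)) := by
  have hbound : ∀ n, ∀ᵐ ω ∂P, ‖cdf μ (X n ω)‖ ≤ 1 := fun n => ae_of_all _ fun ω => by
    rw [Real.norm_of_nonneg (cdf_nonneg _ _)]
    exact cdf_le_one _ _
  simpa using tendsto_integral_of_dominated_convergence (fun _ => 1)
    (fun n => ((monotone_cdf μ).measurable.comp (hX n)).aestronglyMeasurable) (integrable_const 1)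
    hbound (hlim.mono fun ω hω => hc.tendsto.comp hω)

end Coverage

section ConformalQuantile

variable {Ω : Type*} [MeasurableSpace Ω] {P : Measure Ω} {Z : ℕ → Ω → ℝ}

theorem measurable_empiricalConformalQuantile (hmeas : ∀ i, Measurable (Z i)) (α : ℝ) (n : ℕ) :
    Measurable (empiricalConformalQuantile α Z n) :=
  (measurable_orderStatistic _ _).comp (measurable_pi_lambda _ fun i => hmeas i)

theorem ae_tendsto_empiricalConformalQuantile (hmeas : ∀ i, Measurable (Z i))
    (hindep : iIndepFun Z P) (hident : ∀ i, P.map (Z i) = P.map (Z 0)) {α : ℝ} (hα : α < 1)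
    (hsep : ∀ δ > 0, 1 - α < cdf (P.map (Z 0)) (quantile (P.map (Z 0)) (1 - α) + δ)) :
    ∀ᵐ ω ∂P, Tendsto (empiricalConformalQuantile α Z · ω) atTop
      (𝓝 (quantile (P.map (Z 0)) (1 - α))) := by
  have := hindep.isProbabilityMeasure
  have : IsProbabilityMeasure (P.map (Z 0)) :=
    Measure.isProbabilityMeasure_map (hmeas 0).aemeasurable
  set q := quantile (P.map (Z 0)) (1 - α)
  refine ae_tendsto_of_forall_ae_eventually_dist_le fun δ hδ => ?_
  filter_upwards
    [ae_tendsto_card_filter_mem_div hmeas hindep hident (measurableSet_Iic (a := q - δ)),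
      ae_tendsto_card_filter_mem_div hmeas hindep hident (measurableSet_Iic (a := q + δ))]
    with ω hω_low hω_high
  rw [← cdf_eq_real] at hω_low hω_high
  filter_upwards [eventually_orderStatistic_mem_Ioc (tendsto_natCeil_mul_add_one_div (by linarith))
    hω_low hω_high (cdf_lt_of_lt_quantile (by linarith) (by linarith)) (hsep δ hδ)] with n hn
  rw [empiricalConformalQuantile_eq_orderStatistic, Real.dist_eq, abs_le]
  constructor <;> linarith [hn.1, hn.2]

theorem measureReal_le_empiricalConformalQuantile (hmeas : ∀ i, Measurable (Z i))
    (hindep : iIndepFun Z P) (hident : ∀ i, P.map (Z i) = P.map (Z 0)) (α : ℝ) (n : ℕ) :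
    P.real {ω | Z n ω ≤ empiricalConformalQuantile α Z n ω} =
      ∫ ω, cdf (P.map (Z 0)) (empiricalConformalQuantile α Z n ω) ∂P := by
  have := hindep.isProbabilityMeasure
  rw [measureReal_le_eq_integral_cdf (measurable_empiricalConformalQuantile hmeas α n) (hmeas n)
    (hindep.indepFun_comp_initial hmeas (measurable_orderStatistic _ _)), hident n]

end ConformalQuantile

end ProbabilityTheory

/-- Asymptotic validity of inductive conformal prediction: for i.i.d. real random
variables `Z 0, Z 1, …` whose CDF `F` is continuous at the `(1-α)`-quantile
`q_{1-α}` and strictly increasing in a neighbourhood of it, the empirical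
`(1-α)(1+1/n)`-quantile `q̂ₙ` of `Z 0, …, Z (n-1)` converges almost surely to
`q_{1-α}`, and consequently the coverage `Prob{Zₙ ≤ q̂ₙ}` converges to `1-α`. -/
theorem conformal_asymptotic_validity
    {Ω : Type*} [MeasurableSpace Ω] (P : Measure Ω) [IsProbabilityMeasure P]
    (Z : ℕ → Ω → ℝ) (hmeas : ∀ i, Measurable (Z i))
    (hindep : iIndepFun Z P)
    (hident : ∀ i, Measure.map (Z i) P = Measure.map (Z 0) P)
    (α : ℝ) (hα : α ∈ Set.Ioo (0 : ℝ) 1)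
    (F : ℝ → ℝ) (hF : F = fun y => (P {ω | Z 0 ω ≤ y}).toReal)
    (q : ℝ) (hq : q = sInf {y : ℝ | 1 - α ≤ F y})
    (hcont : ContinuousAt F q)
    (hstrict : ∃ ε > 0, StrictMonoOn F (Set.Ioo (q - ε) (q + ε))) :
    (∀ᵐ ω ∂P, Tendsto (fun n => empiricalConformalQuantile α Z n ω) atTop (nhds q)) ∧
      Tendsto (fun n => (P {ω | Z n ω ≤ empiricalConformalQuantile α Z n ω}).toReal)
        atTop (nhds (1 - α)) := by
  obtain ⟨ε, hε, hmono⟩ := hstrict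
  set μ := P.map (Z 0)
  have : IsProbabilityMeasure μ := Measure.isProbabilityMeasure_map (hmeas 0).aemeasurable
  obtain rfl : F = cdf μ := hF.trans <| funext fun y => by
    rw [cdf_eq_real, map_measureReal_apply (hmeas 0) measurableSet_Iic]
    rfl
  obtain rfl : q = quantile μ (1 - α) := hq
  have hp : 1 - α ∈ Set.Ioo 0 1 := ⟨by linarith [hα.2], by linarith [hα.1]⟩
  have hconv := ae_tendsto_empiricalConformalQuantile hmeas hindep hident hα.2
    fun δ hδ => lt_cdf_quantile_add_of_strictMonoOn hp.2 hε hmono hδ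
  refine ⟨hconv, ?_⟩
  simp_rw [← measureReal_def, measureReal_le_empiricalConformalQuantile hmeas hindep hident]
  rw [← cdf_quantile hp hcont]
  exact tendsto_integral_cdf_comp μ (measurable_empiricalConformalQuantile hmeas α) hconv hcont
end
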